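/- Let p ≥ 2 and let Λ = (λ_n) be a sequence of nonnegative reals such that the sequence q_n = p λ_n + 1 is r-lacunary (q_{n+1} ≥ r q_n, r > 1). Then for every finitely supported sequence b, ‖Σ_n b_n t^{λ_n}‖_{L^p([0,1])} ≤ (1 + 2 p^{1/(p-1)}/(r^{1/(p(p-1))} − 1))^{1/p'} (Σ_n |b_n|^p/(p λ_n + 1))^{1/p}, where p' = p/(p−1). -/

import Mathlib

open MeasureTheory Set

/-! Write `b_n t^{λ_n} = c_n g_n` with `g_n` the monomial `t^{λ_n}` normalized in `L^p([0,1])`,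
so that `|c_n|^p = |b_n|^p / (p λ_n + 1)`. Hölder's inequality for finite sums with weights
`g_n(t)` gives `|∑ c_n g_n|^p ≤ (∑ |c_n|^p g_n) (∑ g_m)^{p-1}` pointwise, so it suffices to
bound `∫ g_n (∑_m g_m)^{p-1}`. Minkowski's inequality in `L^{p-1}` bounds it by
`(∑_m G_{mn}^{1/(p-1)})^{p-1}`, where `G_{mn} = ∫ g_m^{p-1} g_n` is explicit: it is `1` on the
diagonal and, by lacunarity, at most `p r^{-|m-n|/p}` off it. The row sums of `G^{1/(p-1)}` are
therefore dominated by a two-sided geometric series with ratio `r^{-1/(p(p-1))}`. -/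

lemma abs_sum_mul_rpow_le {ι : Type*} (s : Finset ι) {p : ℝ} (hp : 1 ≤ p) (c w : ι → ℝ)
    (hw : ∀ i, 0 ≤ w i) :
    |∑ i ∈ s, c i * w i| ^ p ≤ (∑ i ∈ s, |c i| ^ p * w i) * (∑ i ∈ s, w i) ^ (p - 1) := by
  have hp0 : 0 < p := by linarith
  have hW : 0 ≤ ∑ i ∈ s, w i := Finset.sum_nonneg fun i _ => hw i
  have hholder : |∑ i ∈ s, c i * w i|
      ≤ (∑ i ∈ s, w i) ^ (1 - p⁻¹) * (∑ i ∈ s, w i * |c i| ^ p) ^ p⁻¹ := by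
    refine (Finset.abs_sum_le_sum_abs _ _).trans ?_
    simpa only [abs_mul, abs_of_nonneg (hw _), mul_comm (w _)] using
      Real.inner_le_weight_mul_Lp_of_nonneg s hp w (fun i => |c i|) hw fun i => abs_nonneg _
  calc |∑ i ∈ s, c i * w i| ^ p
      ≤ ((∑ i ∈ s, w i) ^ (1 - p⁻¹) * (∑ i ∈ s, w i * |c i| ^ p) ^ p⁻¹) ^ p :=
        Real.rpow_le_rpow (abs_nonneg _) hholder hp0.le
    _ = (∑ i ∈ s, |c i| ^ p * w i) * (∑ i ∈ s, w i) ^ (p - 1) := by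
        have hB : 0 ≤ ∑ i ∈ s, w i * |c i| ^ p :=
          Finset.sum_nonneg fun i _ => mul_nonneg (hw i) (by positivity)
        rw [Real.mul_rpow (by positivity) (by positivity), ← Real.rpow_mul hW,
          ← Real.rpow_mul hB, inv_mul_cancel₀ hp0.ne', Real.rpow_one, sub_mul,
          inv_mul_cancel₀ hp0.ne', one_mul, mul_comm]
        simp only [mul_comm (w _)]

section IntegralInequalities

variable {X : Type*} [TopologicalSpace X] [T2Space X] [MeasurableSpace X] [OpensMeasurableSpace X]
  {μ : Measure X} [IsFiniteMeasureOnCompacts μ] {S : Set X}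

lemma eLpNorm_restrict_eq_ofReal_setIntegral_rpow {q : ℝ} (hq : 0 < q) (hS : IsCompact S)
    {f : X → ℝ} (hf : ContinuousOn f S) (hf0 : ∀ x ∈ S, 0 ≤ f x) :
    eLpNorm f (ENNReal.ofReal q) (μ.restrict S)
      = ENNReal.ofReal ((∫ x in S, f x ^ q ∂μ) ^ (1 / q)) := by
  have hq0 : ENNReal.ofReal q ≠ 0 := by simpa using hq
  have hmem : MemLp f (ENNReal.ofReal q) (μ.restrict S) := by
    refine (integrable_norm_rpow_iff (hf.aestronglyMeasurable hS.measurableSet) hq0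
      ENNReal.ofReal_ne_top).mp ?_
    rw [ENNReal.toReal_ofReal hq.le]
    exact (hf.norm.rpow_const fun _ _ => Or.inr hq.le).integrableOn_compact hS
  rw [hmem.eLpNorm_eq_integral_rpow_norm hq0 ENNReal.ofReal_ne_top, ENNReal.toReal_ofReal hq.le,
    one_div, setIntegral_congr_fun hS.measurableSet fun x hx => by
      rw [Real.norm_of_nonneg (hf0 x hx)]]

lemma setIntegral_sum_rpow_le {ι : Type*} {q : ℝ} (hq : 1 ≤ q) (hS : IsCompact S) (s : Finset ι)
    {G : ι → X → ℝ} (hG : ∀ i ∈ s, ContinuousOn (G i) S) (hG0 : ∀ i ∈ s, ∀ x ∈ S, 0 ≤ G i x) :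
    (∫ x in S, (∑ i ∈ s, G i x) ^ q ∂μ) ^ (1 / q)
      ≤ ∑ i ∈ s, (∫ x in S, G i x ^ q ∂μ) ^ (1 / q) := by
  have hq0 : 0 < q := by linarith
  have hnonneg : ∀ i ∈ s, 0 ≤ (∫ x in S, G i x ^ q ∂μ) ^ (1 / q) := fun i hi =>
    Real.rpow_nonneg (setIntegral_nonneg hS.measurableSet fun x hx =>
      Real.rpow_nonneg (hG0 i hi x hx) q) _
  rw [← ENNReal.ofReal_le_ofReal_iff (Finset.sum_nonneg hnonneg),
    ENNReal.ofReal_sum_of_nonneg hnonneg,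
    ← eLpNorm_restrict_eq_ofReal_setIntegral_rpow hq0 hS (continuousOn_finsetSum s hG)
      fun x hx => Finset.sum_nonneg fun i hi => hG0 i hi x hx,
    Finset.sum_congr rfl fun i hi =>
      (eLpNorm_restrict_eq_ofReal_setIntegral_rpow hq0 hS (hG i hi) (hG0 i hi)).symm]
  convert eLpNorm_sum_le (μ := μ.restrict S)
    (fun i hi => (hG i hi).aestronglyMeasurable hS.measurableSet) (ENNReal.one_le_ofReal.mpr hq)
  exact (Finset.sum_apply _ s G).symm

lemma setIntegral_mul_sum_rpow_le {ι : Type*} {q : ℝ} (hq : 1 ≤ q) (hS : IsCompact S)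
    (s : Finset ι) {g : ι → X → ℝ} {h : X → ℝ} (hg : ∀ i ∈ s, ContinuousOn (g i) S)
    (hg0 : ∀ i ∈ s, ∀ x ∈ S, 0 ≤ g i x) (hh : ContinuousOn h S) (hh0 : ∀ x ∈ S, 0 ≤ h x) :
    ∫ x in S, h x * (∑ i ∈ s, g i x) ^ q ∂μ
      ≤ (∑ i ∈ s, (∫ x in S, g i x ^ q * h x ∂μ) ^ (1 / q)) ^ q := by
  have hq0 : 0 < q := by linarith
  have hpow : ∀ a : ℝ, 0 ≤ a → (a ^ (1 / q)) ^ q = a := fun a ha => by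
    rw [← Real.rpow_mul ha, one_div_mul_cancel hq0.ne', Real.rpow_one]
  -- absorb `h` into the sum as `h ^ (1/q)` and apply Minkowski in `L^q`
  set G : ι → X → ℝ := fun i x => g i x * h x ^ (1 / q)
  have hG0 : ∀ i ∈ s, ∀ x ∈ S, 0 ≤ G i x := fun i hi x hx =>
    mul_nonneg (hg0 i hi x hx) (Real.rpow_nonneg (hh0 x hx) _)
  have hGq : ∀ i ∈ s, ∀ x ∈ S, G i x ^ q = g i x ^ q * h x := fun i hi x hx => by
    rw [Real.mul_rpow (hg0 i hi x hx) (Real.rpow_nonneg (hh0 x hx) _), hpow _ (hh0 x hx)]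
  have hsumq : ∀ x ∈ S, (∑ i ∈ s, G i x) ^ q = h x * (∑ i ∈ s, g i x) ^ q := fun x hx => by
    rw [← Finset.sum_mul, Real.mul_rpow (Finset.sum_nonneg fun i hi => hg0 i hi x hx)
      (Real.rpow_nonneg (hh0 x hx) _), hpow _ (hh0 x hx), mul_comm]
  have hmink := setIntegral_sum_rpow_le (μ := μ) (G := G) hq hS s
    (fun i hi => (hg i hi).mul (hh.rpow_const fun _ _ => Or.inr (by positivity))) hG0
  rw [setIntegral_congr_fun hS.measurableSet hsumq, Finset.sum_congr rfl fun i hi =>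
    by rw [setIntegral_congr_fun hS.measurableSet (hGq i hi)]] at hmink
  have hI0 : 0 ≤ ∫ x in S, h x * (∑ i ∈ s, g i x) ^ q ∂μ :=
    setIntegral_nonneg hS.measurableSet fun x hx => mul_nonneg (hh0 x hx)
      (Real.rpow_nonneg (Finset.sum_nonneg fun i hi => hg0 i hi x hx) q)
  rw [← hpow _ hI0]
  exact Real.rpow_le_rpow (Real.rpow_nonneg hI0 _) hmink hq0.le

theorem setIntegral_abs_sum_rpow_le_of_sum_gram_le {ι : Type*} {p C : ℝ} (hp : 2 ≤ p)
    (hS : IsCompact S) (s : Finset ι) {g : ι → X → ℝ} (hg : ∀ i, ContinuousOn (g i) S)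
    (hg0 : ∀ i, ∀ x ∈ S, 0 ≤ g i x)
    (hgram : ∀ j ∈ s, ∑ i ∈ s, (∫ x in S, g i x ^ (p - 1) * g j x ∂μ) ^ (1 / (p - 1)) ≤ C)
    (c : ι → ℝ) :
    ∫ x in S, |∑ i ∈ s, c i * g i x| ^ p ∂μ ≤ C ^ (p - 1) * ∑ i ∈ s, |c i| ^ p := by
  have hp1 : 1 ≤ p - 1 := by linarith
  have hsum : ContinuousOn (fun x => (∑ i ∈ s, g i x) ^ (p - 1)) S :=
    (continuousOn_finsetSum s fun i _ => hg i).rpow_const fun _ _ => Or.inr (by linarith)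
  have hrow : ∀ j ∈ s, ∫ x in S, g j x * (∑ i ∈ s, g i x) ^ (p - 1) ∂μ ≤ C ^ (p - 1) := by
    intro j hj
    refine (setIntegral_mul_sum_rpow_le hp1 hS s (fun i _ => hg i) (fun i _ => hg0 i)
      (hg j) (hg0 j)).trans (Real.rpow_le_rpow (Finset.sum_nonneg fun i _ => ?_) (hgram j hj)
        (by linarith))
    exact Real.rpow_nonneg (setIntegral_nonneg hS.measurableSet fun x hx =>
      mul_nonneg (Real.rpow_nonneg (hg0 i x hx) _) (hg0 j x hx)) _
  calc ∫ x in S, |∑ i ∈ s, c i * g i x| ^ p ∂μ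
      ≤ ∫ x in S, (∑ j ∈ s, |c j| ^ p * g j x) * (∑ i ∈ s, g i x) ^ (p - 1) ∂μ := by
        refine setIntegral_mono_on ?_ ?_ hS.measurableSet fun x hx =>
          abs_sum_mul_rpow_le s (by linarith) c (g · x) fun i => hg0 i x hx
        · exact ((continuousOn_finsetSum s fun i _ => continuousOn_const.mul (hg i)).abs.rpow_const
            fun _ _ => Or.inr (by linarith)).integrableOn_compact hS
        · exact ((continuousOn_finsetSum s fun j _ => continuousOn_const.mul (hg j)).mul
            hsum).integrableOn_compact hS
    _ = ∑ j ∈ s, |c j| ^ p * ∫ x in S, g j x * (∑ i ∈ s, g i x) ^ (p - 1) ∂μ := by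
        simp only [Finset.sum_mul, mul_assoc]
        rw [integral_finsetSum s (f := fun j x => |c j| ^ p * (g j x * (∑ i ∈ s, g i x) ^ (p - 1)))
          fun j _ => (continuousOn_const.mul ((hg j).mul hsum)).integrableOn_compact hS]
        simp only [integral_const_mul]
    _ ≤ ∑ j ∈ s, |c j| ^ p * C ^ (p - 1) :=
        Finset.sum_le_sum fun j hj => mul_le_mul_of_nonneg_left (hrow j hj) (by positivity)
    _ = C ^ (p - 1) * ∑ i ∈ s, |c i| ^ p := by rw [Finset.mul_sum]; simp only [mul_comm]

end IntegralInequalities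

lemma setIntegral_Icc_zero_one_rpow {a : ℝ} (ha : -1 < a) :
    ∫ t in Icc (0 : ℝ) 1, t ^ a = 1 / (a + 1) := by
  rw [integral_Icc_eq_integral_Ioc, ← intervalIntegral.integral_of_le zero_le_one,
    integral_rpow (Or.inl ha), Real.one_rpow, Real.zero_rpow (by linarith), sub_zero]

/-- The monomial `t ↦ t^a`, scaled to have unit norm in `L^p([0,1])`. -/
noncomputable def normalizedMonomial (p a t : ℝ) : ℝ := (p * a + 1) ^ (1 / p) * t ^ a

/-- The value of `∫₀¹ gₐ^(p-1) g_b` for `g = normalizedMonomial p`, written in terms of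
`A = p a + 1` and `B = p b + 1`. -/
noncomputable def gramEntry (p A B : ℝ) : ℝ :=
  p * (A ^ ((p - 1) / p) * B ^ (1 / p)) / ((p - 1) * A + B)

lemma continuous_normalizedMonomial (p : ℝ) {a : ℝ} (ha : 0 ≤ a) :
    Continuous (normalizedMonomial p a) :=
  continuous_const.mul (Real.continuous_rpow_const ha)

lemma normalizedMonomial_nonneg {p a t : ℝ} (hp : 0 ≤ p) (ha : 0 ≤ a) (ht : 0 ≤ t) :
    0 ≤ normalizedMonomial p a t :=
  mul_nonneg (Real.rpow_nonneg (by positivity) _) (Real.rpow_nonneg ht _)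

lemma div_mul_normalizedMonomial {p a : ℝ} (ha : 0 < p * a + 1) (b t : ℝ) :
    b / (p * a + 1) ^ (1 / p) * normalizedMonomial p a t = b * t ^ a := by
  rw [normalizedMonomial, ← mul_assoc, div_mul_cancel₀ _ (Real.rpow_pos_of_pos ha _).ne']

lemma abs_div_rpow_one_div_rpow {p A : ℝ} (hp : p ≠ 0) (hA : 0 < A) (b : ℝ) :
    |b / A ^ (1 / p)| ^ p = |b| ^ p / A := by
  rw [abs_div, abs_of_pos (Real.rpow_pos_of_pos hA _), Real.div_rpow (abs_nonneg _)
    (Real.rpow_nonneg hA.le _), ← Real.rpow_mul hA.le, one_div_mul_cancel hp, Real.rpow_one]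

lemma setIntegral_normalizedMonomial_gram {p a b : ℝ} (hp : 1 ≤ p) (ha : 0 ≤ a) (hb : 0 ≤ b) :
    ∫ t in Icc (0 : ℝ) 1, normalizedMonomial p a t ^ (p - 1) * normalizedMonomial p b t
      = gramEntry p (p * a + 1) (p * b + 1) := by
  have hA : 0 < p * a + 1 := by positivity
  have hB : 0 < p * b + 1 := by positivity
  have hpt : ∀ t ∈ Icc (0 : ℝ) 1, normalizedMonomial p a t ^ (p - 1) * normalizedMonomial p b t
      = ((p * a + 1) ^ ((p - 1) / p) * (p * b + 1) ^ (1 / p)) * t ^ ((p - 1) * a + b) := by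
    intro t ht
    unfold normalizedMonomial
    rw [Real.mul_rpow (by positivity) (Real.rpow_nonneg ht.1 _), ← Real.rpow_mul hA.le,
      ← Real.rpow_mul ht.1, Real.rpow_add_of_nonneg ht.1 (by nlinarith) hb]
    ring_nf
  rw [setIntegral_congr_fun measurableSet_Icc hpt, integral_const_mul,
    setIntegral_Icc_zero_one_rpow (by nlinarith), gramEntry]
  have : (p - 1) * (p * a + 1) + (p * b + 1) = p * ((p - 1) * a + b + 1) := by ring
  rw [this]
  field_simp

lemma rpow_sub_one_div_mul_rpow_one_div {p A : ℝ} (hp : p ≠ 0) (hA : 0 < A) :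
    A ^ ((p - 1) / p) * A ^ (1 / p) = A := by
  rw [← Real.rpow_add hA, ← add_div, sub_add_cancel, div_self hp, Real.rpow_one]

lemma gramEntry_self {p A : ℝ} (hp : 0 < p) (hA : 0 < A) : gramEntry p A A = 1 := by
  rw [gramEntry, rpow_sub_one_div_mul_rpow_one_div hp.ne' hA, sub_one_mul, sub_add_cancel]
  field_simp

lemma gramEntry_le_of_le {p A B : ℝ} (hp : 2 ≤ p) (hA : 0 < A) (hAB : A ≤ B) :
    gramEntry p A B ≤ p * (A / B) ^ (1 / p) := by
  have hB : 0 < B := hA.trans_le hAB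
  calc gramEntry p A B
      ≤ p * (A ^ ((p - 1) / p) * B ^ (1 / p)) / B := by
        unfold gramEntry
        gcongr
        nlinarith
    _ = p * (A ^ ((p - 1) / p) * B ^ (1 / p)) / (B ^ ((p - 1) / p) * B ^ (1 / p)) := by
        rw [rpow_sub_one_div_mul_rpow_one_div (by positivity) hB]
    _ = p * (A / B) ^ ((p - 1) / p) := by
        rw [Real.div_rpow hA.le hB.le, mul_div_assoc, mul_div_mul_right _ _ (by positivity)]
    _ ≤ p * (A / B) ^ (1 / p) := by
        refine mul_le_mul_of_nonneg_left (Real.rpow_le_rpow_of_exponent_ge (by positivity)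
          (div_le_one_of_le₀ hAB hB.le) ?_) (by positivity)
        gcongr
        linarith

lemma gramEntry_le_of_ge {p A B : ℝ} (hp : 2 ≤ p) (hB : 0 < B) (hBA : B ≤ A) :
    gramEntry p A B ≤ p * (B / A) ^ (1 / p) := by
  have hA : 0 < A := hB.trans_le hBA
  calc gramEntry p A B
      ≤ p * (A ^ ((p - 1) / p) * B ^ (1 / p)) / A := by
        unfold gramEntry
        gcongr
        nlinarith
    _ = p * (A ^ ((p - 1) / p) * B ^ (1 / p)) / (A ^ ((p - 1) / p) * A ^ (1 / p)) := by
        rw [rpow_sub_one_div_mul_rpow_one_div (by positivity) hA]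
    _ = p * (B / A) ^ (1 / p) := by
        rw [Real.div_rpow hB.le hA.le, mul_div_assoc, mul_div_mul_left _ _ (by positivity)]

lemma sum_pow_le_of_injOn {ι : Type*} {y : ℝ} (hy0 : 0 ≤ y) (hy1 : y < 1) {s : Finset ι}
    {f : ι → ℕ} (hf : Set.InjOn f s) (hf1 : ∀ i ∈ s, 1 ≤ f i) :
    ∑ i ∈ s, y ^ f i ≤ y / (1 - y) := by
  have hinj : Set.InjOn (fun i => f i - 1) s := fun i hi j hj h => by
    have := hf1 i hi; have := hf1 j hj
    exact hf hi hj (by simp only at h; omega)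
  calc ∑ i ∈ s, y ^ f i = y * ∑ k ∈ s.image (fun i => f i - 1), y ^ k := by
        rw [Finset.sum_image hinj, Finset.mul_sum]
        refine Finset.sum_congr rfl fun i hi => ?_
        rw [← pow_succ', Nat.sub_add_cancel (hf1 i hi)]
    _ ≤ y * ∑' k, y ^ k := by
        gcongr
        exact (summable_geometric_of_lt_one hy0 hy1).sum_le_tsum _ fun k _ => pow_nonneg hy0 k
    _ = y / (1 - y) := by rw [tsum_geometric_of_lt_one hy0 hy1, div_eq_mul_inv]

lemma sum_erase_pow_dist_le {y : ℝ} (hy0 : 0 ≤ y) (hy1 : y < 1) (s : Finset ℕ) (n : ℕ) :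
    ∑ m ∈ s.erase n, y ^ Nat.dist m n ≤ 2 * (y / (1 - y)) := by
  rw [← Finset.sum_filter_add_sum_filter_not _ (· < n), two_mul]
  gcongr
  all_goals
    refine sum_pow_le_of_injOn hy0 hy1 (fun i hi j hj h => ?_) fun i hi => ?_
    all_goals simp only [Finset.coe_filter, Finset.mem_filter, Finset.mem_erase,
      Set.mem_ofPred_eq, Nat.dist] at *; omega

section Lacunary

variable {p r : ℝ} {Q : ℕ → ℝ}

lemma pow_mul_le_of_lacunary (hr : 0 ≤ r) (hQ : ∀ n, r * Q n ≤ Q (n + 1))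
    (m k : ℕ) : r ^ k * Q m ≤ Q (m + k) := by
  induction k with
  | zero => simp
  | succ k ih =>
    calc r ^ (k + 1) * Q m = r * (r ^ k * Q m) := by ring
      _ ≤ r * Q (m + k) := by gcongr
      _ ≤ Q (m + (k + 1)) := hQ (m + k)

lemma gramEntry_le_of_lacunary (hp : 2 ≤ p) (hr : 1 ≤ r) (hQ0 : ∀ n, 0 < Q n)
    (hQ : ∀ n, r * Q n ≤ Q (n + 1)) (m n : ℕ) :
    gramEntry p (Q m) (Q n) ≤ p * ((r ^ Nat.dist m n)⁻¹) ^ (1 / p) := by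
  have hratio : ∀ i k, Q i ≤ Q (i + k) ∧ Q i / Q (i + k) ≤ (r ^ k)⁻¹ := fun i k => by
    have hgrowth := pow_mul_le_of_lacunary (by linarith) hQ i k
    have hrk : 1 ≤ r ^ k := one_le_pow₀ hr
    refine ⟨by nlinarith [hQ0 i], ?_⟩
    rw [div_le_iff₀ (hQ0 _), inv_mul_eq_div, le_div_iff₀ (by positivity)]
    linarith
  rcases le_total m n with h | h
  · obtain ⟨k, rfl⟩ := Nat.exists_eq_add_of_le h
    rw [Nat.dist_eq_sub_of_le h, Nat.add_sub_cancel_left]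
    refine (gramEntry_le_of_le hp (hQ0 m) (hratio m k).1).trans ?_
    gcongr
    exacts [div_nonneg (hQ0 _).le (hQ0 _).le, (hratio m k).2]
  · obtain ⟨k, rfl⟩ := Nat.exists_eq_add_of_le h
    rw [Nat.dist_eq_sub_of_le_right h, Nat.add_sub_cancel_left]
    refine (gramEntry_le_of_ge hp (hQ0 n) (hratio n k).1).trans ?_
    gcongr
    exacts [div_nonneg (hQ0 _).le (hQ0 _).le, (hratio n k).2]

lemma gramEntry_rpow_le_of_lacunary (hp : 2 ≤ p) (hr : 1 ≤ r) (hQ0 : ∀ n, 0 < Q n)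
    (hQ : ∀ n, r * Q n ≤ Q (n + 1)) (m n : ℕ) :
    gramEntry p (Q m) (Q n) ^ (1 / (p - 1))
      ≤ p ^ (1 / (p - 1)) * ((r ^ (1 / (p * (p - 1))))⁻¹) ^ Nat.dist m n := by
  have hp0 : 0 < p := by linarith
  have hr0 : 0 < r := by linarith
  have hgram0 : 0 ≤ gramEntry p (Q m) (Q n) := by
    have := hQ0 m; have := hQ0 n; have : 0 ≤ p - 1 := by linarith
    unfold gramEntry
    positivity
  calc gramEntry p (Q m) (Q n) ^ (1 / (p - 1))
      ≤ (p * ((r ^ Nat.dist m n)⁻¹) ^ (1 / p)) ^ (1 / (p - 1)) :=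
        Real.rpow_le_rpow hgram0 (gramEntry_le_of_lacunary hp hr hQ0 hQ m n)
          (one_div_nonneg.mpr (by linarith))
    _ = p ^ (1 / (p - 1)) * ((r ^ (1 / (p * (p - 1))))⁻¹) ^ Nat.dist m n := by
        rw [Real.mul_rpow hp0.le (by positivity), ← Real.rpow_mul (by positivity),
          Real.inv_rpow (by positivity), inv_pow, ← Real.rpow_natCast r, ← Real.rpow_mul hr0.le,
          ← Real.rpow_natCast (r ^ _), ← Real.rpow_mul hr0.le]
        congr 3
        field_simp

lemma sum_gramEntry_rpow_le_of_lacunary (hp : 2 ≤ p) (hr : 1 < r) (hQ0 : ∀ n, 0 < Q n)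
    (hQ : ∀ n, r * Q n ≤ Q (n + 1)) {s : Finset ℕ} {n : ℕ} (hn : n ∈ s) :
    ∑ m ∈ s, gramEntry p (Q m) (Q n) ^ (1 / (p - 1))
      ≤ 1 + 2 * p ^ (1 / (p - 1)) / (r ^ (1 / (p * (p - 1))) - 1) := by
  set ρ := r ^ (1 / (p * (p - 1)))
  have hρ : 1 < ρ := Real.one_lt_rpow hr (div_pos one_pos (mul_pos (by linarith) (by linarith)))
  have hy0 : 0 ≤ ρ⁻¹ := by positivity
  have hy1 : ρ⁻¹ < 1 := inv_lt_one_of_one_lt₀ hρ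
  rw [← Finset.add_sum_erase s _ hn, gramEntry_self (by linarith) (hQ0 n), Real.one_rpow]
  gcongr
  calc ∑ m ∈ s.erase n, gramEntry p (Q m) (Q n) ^ (1 / (p - 1))
      ≤ ∑ m ∈ s.erase n, p ^ (1 / (p - 1)) * ρ⁻¹ ^ Nat.dist m n :=
        Finset.sum_le_sum fun m _ => gramEntry_rpow_le_of_lacunary hp hr.le hQ0 hQ m n
    _ ≤ p ^ (1 / (p - 1)) * (2 * (ρ⁻¹ / (1 - ρ⁻¹))) := by
        rw [← Finset.mul_sum]
        gcongr
        exact sum_erase_pow_dist_le hy0 hy1 s n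
    _ = 2 * p ^ (1 / (p - 1)) / (ρ - 1) := by
        have : ρ - 1 ≠ 0 := by linarith
        field_simp

end Lacunary

theorem stmt5 (p p' r : ℝ) (hp : 2 ≤ p) (hp' : p' = p / (p - 1)) (hr : 1 < r)
    (lam : ℕ → ℝ) (hlam0 : ∀ n, 0 ≤ lam n)
    (hlac : ∀ n, r * (p * lam n + 1) ≤ p * lam (n+1) + 1) :
    ∀ b : ℕ →₀ ℝ,
      (∫ t in Set.Icc (0:ℝ) 1, |∑ n ∈ b.support, b n * t ^ lam n| ^ p) ^ (1/p)
        ≤ (1 + 2 * p ^ (1/(p-1)) / (r ^ (1/(p*(p-1))) - 1)) ^ (1/p')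
            * (∑ n ∈ b.support, |b n| ^ p / (p * lam n + 1)) ^ (1/p) := by
  intro b
  have hp0 : 0 < p := by linarith
  have hQ0 : ∀ n, 0 < p * lam n + 1 := fun n => by have := hlam0 n; positivity
  set C := 1 + 2 * p ^ (1 / (p - 1)) / (r ^ (1 / (p * (p - 1))) - 1)
  have hC : 0 ≤ C := add_nonneg zero_le_one (div_nonneg (by positivity) (sub_nonneg.mpr
    (Real.one_le_rpow hr.le (div_nonneg zero_le_one (mul_nonneg hp0.le (by linarith))))))
  have hgram : ∀ j ∈ b.support, ∑ i ∈ b.support, (∫ t in Icc (0 : ℝ) 1,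
      normalizedMonomial p (lam i) t ^ (p - 1) * normalizedMonomial p (lam j) t) ^ (1 / (p - 1))
        ≤ C := fun j hj => by
    simp only [setIntegral_normalizedMonomial_gram (by linarith : 1 ≤ p) (hlam0 _) (hlam0 _)]
    exact sum_gramEntry_rpow_le_of_lacunary hp hr hQ0 hlac hj
  have key := setIntegral_abs_sum_rpow_le_of_sum_gram_le hp isCompact_Icc b.support
    (g := fun n => normalizedMonomial p (lam n))
    (fun n => (continuous_normalizedMonomial p (hlam0 n)).continuousOn)
    (fun n t ht => normalizedMonomial_nonneg hp0.le (hlam0 n) ht.1) hgram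
    (fun n => b n / (p * lam n + 1) ^ (1 / p))
  simp only [div_mul_normalizedMonomial, abs_div_rpow_one_div_rpow hp0.ne', hQ0] at key
  calc (∫ t in Icc (0 : ℝ) 1, |∑ n ∈ b.support, b n * t ^ lam n| ^ p) ^ (1 / p)
      ≤ (C ^ (p - 1) * ∑ n ∈ b.support, |b n| ^ p / (p * lam n + 1)) ^ (1 / p) :=
        Real.rpow_le_rpow (setIntegral_nonneg measurableSet_Icc fun t _ => by positivity) key
          (by positivity)
    _ = C ^ (1 / p') * (∑ n ∈ b.support, |b n| ^ p / (p * lam n + 1)) ^ (1 / p) := by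
        rw [Real.mul_rpow (by positivity) (Finset.sum_nonneg fun n _ => by
          have := hQ0 n; positivity), ← Real.rpow_mul hC, hp']
        congr 2
        field_simp
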